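/- There is a constant C > 0 such that for all φ ∈ ℝ, p ∈ ℝ³, and all indices i,j,k,l, the second partial derivative ∂_{p^k}∂_{p^l} D^{ij}[φ](p) satisfies |∂_{p^k}∂_{p^l} D^{ij}[φ](p)| ≤ C e^{−φ}. -/

import Mathlib

/-!
With `s = √(e^{2φ} + |p|²) ≥ e^φ`, the Hessian of `D^{ij} = (e^{2φ} δ^{ij} + p^i p^j) / s` is a
sum of terms `s^{-(2m+1)}` times polynomials of degree `2m` in `p` and `e^φ`. After dividing each
`p^i` by `s` and `e^{2φ} + p^i p^j` by `s²`, every factor is bounded by `1` or `2`, so every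
second derivative is bounded by `14 / s ≤ 14 e^{-φ}`.
-/

noncomputable def Dmat (φ : ℝ) (p : EuclideanSpace ℝ (Fin 3)) (i j : Fin 3) : ℝ :=
  (Real.exp (2 * φ) * (if i = j then 1 else 0) + p i * p j) /
    Real.sqrt (Real.exp (2 * φ) + ‖p‖ ^ 2)

open Real
open scoped RealInnerProductSpace

theorem iteratedFDeriv_two_apply_eq_fderiv_fderiv_apply {𝕜 E F : Type*}
    [NontriviallyNormedField 𝕜] [NormedAddCommGroup E] [NormedSpace 𝕜 E] [NormedAddCommGroup F]
    [NormedSpace 𝕜 F] {f : E → F} (hf : ContDiff 𝕜 2 f) (p u v : E) :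
    iteratedFDeriv 𝕜 2 f p ![u, v] = fderiv 𝕜 (fun q => fderiv 𝕜 f q v) p u := by
  have hf' : DifferentiableAt 𝕜 (fderiv 𝕜 f) p :=
    ((hf.fderiv_right (m := 1) le_rfl).differentiable one_ne_zero).differentiableAt
  rw [iteratedFDeriv_two_apply, fderiv_clm_apply hf' (differentiableAt_const v)]
  simp

theorem abs_mul_add_mul_le_two {a b c d : ℝ} (ha : |a| ≤ 1) (hb : |b| ≤ 1) (hc : |c| ≤ 1)
    (hd : |d| ≤ 1) : |a * b + c * d| ≤ 2 :=
  calc |a * b + c * d| ≤ |a| * |b| + |c| * |d| := by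
        rw [← abs_mul, ← abs_mul]
        exact abs_add_le _ _
    _ ≤ 1 * 1 + 1 * 1 := by gcongr
    _ = 2 := by norm_num

/-- The Hessian of `dForm` below times `s`, in the variables `X = ⟪x, p⟫ / s`, …,
`V = ⟪v, p⟫ / s`, `n = (a² ⟪x, y⟫ + ⟪x, p⟫ ⟪y, p⟫) / s²` and
`(p, q, r, t, w) = (⟪x, v⟫, ⟪y, u⟫, ⟪x, u⟫, ⟪y, v⟫, ⟪u, v⟫)`. -/
theorem abs_rescaled_hessian_le {X Y U V p q r t w n : ℝ} (hX : |X| ≤ 1) (hY : |Y| ≤ 1)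
    (hU : |U| ≤ 1) (hV : |V| ≤ 1) (hp : |p| ≤ 1) (hq : |q| ≤ 1) (hr : |r| ≤ 1) (ht : |t| ≤ 1)
    (hw : |w| ≤ 1) (hn : |n| ≤ 2) :
    |(p * q + r * t) - (p * Y + X * t) * U - (r * Y + X * q) * V - n * w + 3 * n * U * V| ≤ 14 := by
  have h₁ := abs_mul_add_mul_le_two hp hq hr ht
  have h₂ := abs_mul_add_mul_le_two hp hY hX ht
  have h₃ := abs_mul_add_mul_le_two hr hY hX hq
  calc _ ≤ |p * q + r * t| + |(p * Y + X * t) * U| + |(r * Y + X * q) * V| + |n * w|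
          + |3 * n * U * V| := by
        grw [abs_add_le, abs_sub, abs_sub, abs_sub]
    _ ≤ 2 + 2 * 1 + 2 * 1 + 2 * 1 + 3 * 2 * 1 * 1 := by
        simp only [abs_mul, Nat.abs_ofNat]
        gcongr
    _ = 14 := by norm_num

section

variable {E : Type*} [NormedAddCommGroup E] {a : ℝ}

noncomputable def japaneseBracket (a : ℝ) (q : E) : ℝ := √(a ^ 2 + ‖q‖ ^ 2)

theorem japaneseBracket_pos (ha : 0 < a) (q : E) : 0 < japaneseBracket a q := by
  unfold japaneseBracket
  positivity

theorem le_japaneseBracket (q : E) : a ≤ japaneseBracket a q :=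
  Real.le_sqrt_of_sq_le (le_add_of_nonneg_right (by positivity))

theorem norm_le_japaneseBracket (q : E) : ‖q‖ ≤ japaneseBracket a q :=
  Real.le_sqrt_of_sq_le (le_add_of_nonneg_left (by positivity))

variable [InnerProductSpace ℝ E]

theorem hasFDerivAt_japaneseBracket (ha : 0 < a) (q : E) :
    HasFDerivAt (japaneseBracket a) ((japaneseBracket a q)⁻¹ • innerSL ℝ q) q := by
  have h : HasFDerivAt (fun q : E => a ^ 2 + ‖q‖ ^ 2) (2 • innerSL ℝ q) q := by
    simpa using (hasFDerivAt_id q).norm_sq.const_add (a ^ 2)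
  refine (h.sqrt (by positivity)).congr_fderiv ?_
  ext v
  simp only [japaneseBracket, one_div, mul_inv_rev, smul_apply, coe_innerSL_apply, nsmul_eq_mul,
    Nat.cast_ofNat, smul_eq_mul]
  field_simp

theorem hasFDerivAt_inv_japaneseBracket (ha : 0 < a) (q : E) :
    HasFDerivAt (fun q => (japaneseBracket a q)⁻¹)
      (-(japaneseBracket a q)⁻¹ ^ 3 • innerSL ℝ q) q := by
  refine ((hasDerivAt_inv (japaneseBracket_pos ha q).ne').comp_hasFDerivAt q
    (hasFDerivAt_japaneseBracket ha q)).congr_fderiv ?_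
  ext v
  simp only [neg_smul, neg_apply, smul_apply, coe_innerSL_apply, smul_eq_mul, inv_pow, neg_inj]
  ring

/-- `⟪x, D y⟫` for the matrix `D[φ](q)` of the statement, with `a = e^φ`. -/
noncomputable def dForm (a : ℝ) (x y q : E) : ℝ :=
  (a ^ 2 * ⟪x, y⟫ + ⟪x, q⟫ * ⟪y, q⟫) / japaneseBracket a q

theorem contDiff_dForm {n : WithTop ℕ∞} (ha : 0 < a) (x y : E) : ContDiff ℝ n (dForm a x y) := by
  have hs : ContDiff ℝ n (japaneseBracket a : E → ℝ) :=
    (contDiff_const.add (contDiff_norm_sq ℝ)).sqrt fun q => by positivity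
  exact (contDiff_const.add ((innerSL ℝ x).contDiff.mul (innerSL ℝ y).contDiff)).div hs
    fun q => (japaneseBracket_pos ha q).ne'

theorem fderiv_dForm_apply (ha : 0 < a) (x y v q : E) :
    fderiv ℝ (dForm a x y) q v =
      (⟪x, v⟫ * ⟪y, q⟫ + ⟪x, q⟫ * ⟪y, v⟫) * (japaneseBracket a q)⁻¹
        - (a ^ 2 * ⟪x, y⟫ + ⟪x, q⟫ * ⟪y, q⟫) * ⟪v, q⟫ * (japaneseBracket a q)⁻¹ ^ 3 := by
  have hN := (((innerSL ℝ x).hasFDerivAt (x := q)).mul (innerSL ℝ y).hasFDerivAt).const_add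
    (a ^ 2 * ⟪x, y⟫)
  have h := hN.mul (hasFDerivAt_inv_japaneseBracket ha q)
  rw [show dForm a x y = fun q => (a ^ 2 * ⟪x, y⟫ + ⟪x, q⟫ * ⟪y, q⟫) * (japaneseBracket a q)⁻¹
    from funext fun _ => div_eq_mul_inv _ _]
  refine (DFunLike.congr_fun h.fderiv v).trans ?_
  simp only [coe_innerSL_apply, Pi.mul_apply, inv_pow, neg_smul, smul_neg, smul_add, add_apply,
    neg_apply, smul_apply, smul_eq_mul, real_inner_comm v q]
  ring

theorem fderiv_fderiv_dForm_apply (ha : 0 < a) (x y u v p : E) :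
    fderiv ℝ (fun q => fderiv ℝ (dForm a x y) q v) p u =
      (⟪x, u⟫ * ⟪y, v⟫ + ⟪x, v⟫ * ⟪y, u⟫) * (japaneseBracket a p)⁻¹
        - ((⟪x, v⟫ * ⟪y, p⟫ + ⟪x, p⟫ * ⟪y, v⟫) * ⟪u, p⟫
            + (⟪x, u⟫ * ⟪y, p⟫ + ⟪x, p⟫ * ⟪y, u⟫) * ⟪v, p⟫
            + (a ^ 2 * ⟪x, y⟫ + ⟪x, p⟫ * ⟪y, p⟫) * ⟪u, v⟫) * (japaneseBracket a p)⁻¹ ^ 3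
        + 3 * (a ^ 2 * ⟪x, y⟫ + ⟪x, p⟫ * ⟪y, p⟫) * ⟪u, p⟫ * ⟪v, p⟫
            * (japaneseBracket a p)⁻¹ ^ 5 := by
  have hx := (innerSL ℝ x).hasFDerivAt (x := p)
  have hy := (innerSL ℝ y).hasFDerivAt (x := p)
  have hv := (innerSL ℝ v).hasFDerivAt (x := p)
  have hW := hasFDerivAt_inv_japaneseBracket ha p
  have h := (((hy.const_mul ⟪x, v⟫).add (hx.mul_const ⟪y, v⟫)).mul hW).sub
    ((((hx.mul hy).const_add (a ^ 2 * ⟪x, y⟫)).mul hv).mul (hW.pow 3))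
  simp_rw [fderiv_dForm_apply ha]
  refine (DFunLike.congr_fun h.fderiv u).trans ?_
  simp only [coe_innerSL_apply, Pi.add_apply, Pi.mul_apply, inv_pow, neg_smul, smul_neg,
    smul_add, Nat.add_one_sub_one, nsmul_eq_mul, Nat.cast_ofNat, sub_apply, add_apply, neg_apply,
    smul_apply, smul_eq_mul, real_inner_comm u p, real_inner_comm u v]
  ring

theorem abs_fderiv_fderiv_dForm_apply_le (ha : 0 < a) {x y u v : E} (hx : ‖x‖ ≤ 1)
    (hy : ‖y‖ ≤ 1) (hu : ‖u‖ ≤ 1) (hv : ‖v‖ ≤ 1) (p : E) :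
    |fderiv ℝ (fun q => fderiv ℝ (dForm a x y) q v) p u| ≤ 14 * (japaneseBracket a p)⁻¹ := by
  set s := japaneseBracket a p
  have hs : 0 < s := japaneseBracket_pos ha p
  have inner_le {z w : E} (hz : ‖z‖ ≤ 1) (hw : ‖w‖ ≤ 1) : |⟪z, w⟫| ≤ 1 :=
    (abs_real_inner_le_norm z w).trans (mul_le_one₀ hz (norm_nonneg w) hw)
  have rescaled_le {z : E} (hz : ‖z‖ ≤ 1) : |⟪z, p⟫ * s⁻¹| ≤ 1 := by
    rw [abs_mul, abs_inv, abs_of_pos hs, ← div_eq_mul_inv, div_le_one hs]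
    exact (abs_real_inner_le_norm z p).trans
      ((mul_le_of_le_one_left (norm_nonneg p) hz).trans (norm_le_japaneseBracket p))
  have ha_le : |a ^ 2 * s⁻¹ ^ 2| ≤ 1 := by
    rw [← mul_pow, abs_pow, pow_le_one_iff_of_nonneg (abs_nonneg _) two_ne_zero, abs_mul,
      abs_of_pos ha, abs_inv, abs_of_pos hs, ← div_eq_mul_inv, div_le_one hs]
    exact le_japaneseBracket p
  have hn : |(a ^ 2 * ⟪x, y⟫ + ⟪x, p⟫ * ⟪y, p⟫) * s⁻¹ ^ 2| ≤ 2 :=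
    (congrArg abs (by ring)).trans_le
      (abs_mul_add_mul_le_two ha_le (inner_le hx hy) (rescaled_le hx) (rescaled_le hy))
  rw [fderiv_fderiv_dForm_apply ha]
  refine ((congrArg abs ?_).trans (abs_mul _ _)).trans_le
    (mul_le_mul (abs_rescaled_hessian_le (rescaled_le hx) (rescaled_le hy) (rescaled_le hu)
      (rescaled_le hv) (inner_le hx hv) (inner_le hy hu) (inner_le hx hu) (inner_le hy hv)
      (inner_le hu hv) hn) (abs_of_pos (inv_pos.2 hs)).le (abs_nonneg _) (by norm_num))
  ring

theorem abs_iteratedFDeriv_two_dForm_le (ha : 0 < a) {x y u v : E} (hx : ‖x‖ ≤ 1)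
    (hy : ‖y‖ ≤ 1) (hu : ‖u‖ ≤ 1) (hv : ‖v‖ ≤ 1) (p : E) :
    |iteratedFDeriv ℝ 2 (dForm a x y) p ![u, v]| ≤ 14 / a := by
  rw [iteratedFDeriv_two_apply_eq_fderiv_fderiv_apply (contDiff_dForm ha x y)]
  calc _ ≤ 14 * (japaneseBracket a p)⁻¹ := abs_fderiv_fderiv_dForm_apply_le ha hx hy hu hv p
    _ ≤ 14 / a := by
      rw [div_eq_mul_inv]
      gcongr
      exact le_japaneseBracket p

end

theorem Dmat_eq_dForm (φ : ℝ) (p : EuclideanSpace ℝ (Fin 3)) (i j : Fin 3) :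
    Dmat φ p i j = dForm (exp φ) (EuclideanSpace.single i 1) (EuclideanSpace.single j 1) p := by
  simp [Dmat, dForm, japaneseBracket, ← exp_nat_mul, EuclideanSpace.inner_single_left]

theorem stmt_10 : ∃ C : ℝ, 0 < C ∧
    ∀ (φ : ℝ) (p : EuclideanSpace ℝ (Fin 3)) (i j k l : Fin 3),
      |iteratedFDeriv ℝ 2 (fun q => Dmat φ q i j) p
          ![EuclideanSpace.single k 1, EuclideanSpace.single l 1]| ≤ C * Real.exp (-φ) := by
  refine ⟨14, by norm_num, fun φ p i j k l => ?_⟩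
  simp_rw [Dmat_eq_dForm, exp_neg, ← div_eq_mul_inv]
  exact abs_iteratedFDeriv_two_dForm_le (exp_pos φ) (by simp) (by simp) (by simp) (by simp) p
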